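/- arXiv:1903.10551 — 4 statements merged into one kernel-verified Lean document; each statement's English description precedes it below -/
import Mathlib

section
/- Let L > 0, M > 0, and let s be a complex number with |L · Im s| ≤ M. Then |sin(L s)/sin(s)| ≤ C·L for a constant C depending only on M (valid for s in a region where sin s ≠ 0, e.g. Re s ∈ [c, π − c] with |Im s| small, or for all real s). -/
lemma aux_norm_cos (w : ℂ) : ‖Complex.cos w‖ ≤ Real.exp |w.im| := by
  have h1 : ‖Complex.exp (w * Complex.I)‖ = Real.exp (-w.im) := by
    rw [Complex.norm_exp]
    congr 1
    simp [Complex.mul_re]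
  have h2 : ‖Complex.exp (-w * Complex.I)‖ = Real.exp w.im := by
    rw [Complex.norm_exp]
    congr 1
    simp [Complex.mul_re]
  have e1 : Real.exp (-w.im) ≤ Real.exp |w.im| := Real.exp_le_exp.2 (neg_le_abs _)
  have e2 : Real.exp w.im ≤ Real.exp |w.im| := Real.exp_le_exp.2 (le_abs_self _)
  calc ‖Complex.cos w‖ = ‖Complex.exp (w * Complex.I) + Complex.exp (-w * Complex.I)‖ / 2 := by
        rw [Complex.cos, norm_div]; norm_num
    _ ≤ (‖Complex.exp (w * Complex.I)‖ + ‖Complex.exp (-w * Complex.I)‖) / 2 := by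
        gcongr; exact norm_add_le _ _
    _ ≤ Real.exp |w.im| := by rw [h1, h2]; linarith

lemma aux_key (z : ℂ) : ∀ n : ℕ,
    ‖Complex.sin ((n : ℂ) * z)‖ ≤ n * Real.exp (n * |z.im|) * ‖Complex.sin z‖ := by
  intro n
  induction n with
  | zero => simp
  | succ n ih =>
    set t := |z.im| with ht
    have ht0 : 0 ≤ t := abs_nonneg _
    have hz : ((n + 1 : ℕ) : ℂ) * z = (n : ℂ) * z + z := by push_cast; ring
    rw [hz, Complex.sin_add]
    have him : ((n : ℂ) * z).im = n * z.im := by simp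
    have hc1 : ‖Complex.cos z‖ ≤ Real.exp t := aux_norm_cos z
    have hc2 : ‖Complex.cos ((n : ℂ) * z)‖ ≤ Real.exp (((n : ℝ) + 1) * t) := by
      calc ‖Complex.cos ((n : ℂ) * z)‖ ≤ Real.exp |((n : ℂ) * z).im| := aux_norm_cos _
        _ ≤ Real.exp (((n : ℝ) + 1) * t) := by
            apply Real.exp_le_exp.2
            rw [him, abs_mul, Nat.abs_cast]
            nlinarith [Nat.cast_nonneg (α := ℝ) n]
    have he : Real.exp (((n : ℝ) + 1) * t) = Real.exp ((n : ℝ) * t) * Real.exp t := by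
      rw [← Real.exp_add]; ring_nf
    calc ‖Complex.sin ((n : ℂ) * z) * Complex.cos z + Complex.cos ((n : ℂ) * z) * Complex.sin z‖
        ≤ ‖Complex.sin ((n : ℂ) * z)‖ * ‖Complex.cos z‖ +
          ‖Complex.cos ((n : ℂ) * z)‖ * ‖Complex.sin z‖ := by
          refine (norm_add_le _ _).trans ?_
          rw [norm_mul, norm_mul]
      _ ≤ ((n : ℝ) * Real.exp ((n : ℝ) * t) * ‖Complex.sin z‖) * Real.exp t +
          Real.exp (((n : ℝ) + 1) * t) * ‖Complex.sin z‖ := by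
          gcongr
      _ = ((n : ℝ) + 1) * Real.exp (((n : ℝ) + 1) * t) * ‖Complex.sin z‖ := by
          rw [he]; ring
      _ = ((n + 1 : ℕ) : ℝ) * Real.exp (((n + 1 : ℕ) : ℝ) * t) * ‖Complex.sin z‖ := by
          push_cast; ring_nf

/-- For every `M > 0` there is a constant `C > 0` (depending only on `M`) such that
for every positive integer `L` and every complex `s` with `|L·Im s| ≤ M` and
`Re s ∈ [0, π]`, one has `|sin(L s)| ≤ C·L·|sin s|`. -/
theorem stmt3 (M : ℝ) (hM : 0 < M) :
    ∃ C > 0, ∀ L : ℕ, 1 ≤ L → ∀ s : ℂ,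
      |(L : ℝ) * s.im| ≤ M → s.re ∈ Set.Icc 0 Real.pi →
        ‖Complex.sin ((L : ℂ) * s)‖ ≤ C * L * ‖Complex.sin s‖ := by
  refine ⟨Real.exp M, Real.exp_pos M, fun L hL s hsM _ => ?_⟩
  have h := aux_key s L
  have hLe : (L : ℝ) * |s.im| ≤ M := by
    rwa [abs_mul, Nat.abs_cast] at hsM
  calc ‖Complex.sin ((L : ℂ) * s)‖ ≤ L * Real.exp (L * |s.im|) * ‖Complex.sin s‖ := h
    _ ≤ L * Real.exp M * ‖Complex.sin s‖ := by
        gcongr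
    _ = Real.exp M * L * ‖Complex.sin s‖ := by ring
end

section
/- Let L ≥ 1, ℓ a natural number, and s real. Then the ℓ-th derivative of the function s ↦ sin(L·s)/sin(s) is bounded in absolute value by C·L^{ℓ+1} for a constant C depending only on ℓ, uniformly for s ∈ [0, π]. -/
/-! The Dirichlet kernel is a sum of `L` exponentials `e^{iωx}` with `|ω| ≤ L - 1`;
differentiating `ℓ` times multiplies each by `(iω)^ℓ`, so the triangle inequality gives
`L · L^ℓ` with `C = 1`, uniformly in `x ∈ ℝ`. -/

open Complex Finset

theorem iteratedDeriv_sum_cexp_mul_ofReal {ι : Type*} (t : Finset ι) (c : ι → ℂ) (n : ℕ) :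
    iteratedDeriv n (fun x : ℝ => ∑ k ∈ t, cexp (c k * x)) =
      fun x : ℝ => ∑ k ∈ t, c k ^ n * cexp (c k * x) := by
  induction n with
  | zero => simp
  | succ n ih =>
    funext x
    have hterm (k : ι) : HasDerivAt (fun y : ℝ => c k ^ n * cexp (c k * y))
        (c k ^ (n + 1) * cexp (c k * x)) x := by
      have hlin : HasDerivAt (fun y : ℝ => c k * (y : ℂ)) (c k * 1) x :=
        ofRealCLM.hasDerivAt.const_mul (c k)
      exact (hlin.cexp.const_mul (c k ^ n)).congr_deriv (by ring)
    rw [iteratedDeriv_succ, ih, (HasDerivAt.fun_sum fun k _ => hterm k).deriv]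

theorem norm_iteratedDeriv_sum_cexp_I_mul_le {ι : Type*} (t : Finset ι) (a : ι → ℝ) {M : ℝ}
    (ha : ∀ k ∈ t, |a k| ≤ M) (n : ℕ) (x : ℝ) :
    ‖iteratedDeriv n (fun y : ℝ => ∑ k ∈ t, cexp (I * a k * y)) x‖ ≤ #t * M ^ n := by
  rw [iteratedDeriv_sum_cexp_mul_ofReal, ← nsmul_eq_mul, ← sum_const]
  refine norm_sum_le_of_le t fun k hk => ?_
  have hexp : ‖cexp (I * a k * x)‖ = 1 := by
    simpa [mul_assoc] using norm_exp_I_mul_ofReal (a k * x)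
  rw [norm_mul, norm_pow, hexp, mul_one, norm_mul, norm_I, one_mul, norm_real, Real.norm_eq_abs]
  exact pow_le_pow_left₀ (abs_nonneg _) (ha k hk) n

theorem abs_sub_one_sub_two_mul_le {L k : ℕ} (hk : k < L) : |(L : ℝ) - 1 - 2 * k| ≤ L := by
  have hk' : (k : ℝ) + 1 ≤ L := by exact_mod_cast hk
  rw [abs_le]
  constructor <;> linarith [(Nat.cast_nonneg k : (0 : ℝ) ≤ k)]

/-- For each `ℓ` there is a constant `C > 0` such that for every integer `L ≥ 1` and
`s ∈ [0, π]`, the `ℓ`-th derivative of `s ↦ sin(Ls)/sin(s)` (written as the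
Dirichlet-kernel-type trigonometric polynomial `∑_{k<L} e^{i(L-1-2k)s}`, which is the
continuous extension) is bounded by `C·L^{ℓ+1}`. -/
theorem stmt4 (ℓ : ℕ) :
    ∃ C > 0, ∀ L : ℕ, 1 ≤ L → ∀ s : ℝ, s ∈ Set.Icc 0 Real.pi →
      ‖iteratedDeriv ℓ (fun x : ℝ =>
          ∑ k ∈ Finset.range L, Complex.exp (Complex.I * ((L : ℂ) - 1 - 2 * k) * x)) s‖ ≤
        C * (L : ℝ) ^ (ℓ + 1) := by
  refine ⟨1, one_pos, fun L _ s _ => ?_⟩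
  have hfreq : (fun x : ℝ => ∑ k ∈ range L, cexp (I * ((L : ℂ) - 1 - 2 * k) * x)) =
      fun x : ℝ => ∑ k ∈ range L, cexp (I * ((L - 1 - 2 * k : ℝ) : ℂ) * x) := by
    push_cast
    rfl
  calc _ ≤ #(range L) * (L : ℝ) ^ ℓ := by
        rw [hfreq]
        exact norm_iteratedDeriv_sum_cexp_I_mul_le _ _
          (fun k hk => abs_sub_one_sub_two_mul_le (mem_range.mp hk)) ℓ s
    _ = 1 * (L : ℝ) ^ (ℓ + 1) := by rw [card_range]; ring
end

section
/- Let a ∈ W^α with α ≥ 2, a_j = a_{-j}, and define for s ∈ (0,π) the function b(t,s) = (a(t) − g(s)) e^{is} / ((t − e^{is})(t^{-1} − e^{is})), where g(s) = a(e^{is}). Then b(·, s) ∈ W^{α−2} and ‖b(·,s)‖_{α−2} ≤ C‖a‖_α with C independent of s ∈ (0,π). -/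
/-!
Write `E = exp (i s)`, so that `(t - E) (t⁻¹ - E) = -E (t + t⁻¹ - 2 cos s)` and
`b(t) = (g(s) - a(t)) / (t + t⁻¹ - 2 cos s)`. By symmetry,
`a(t) - g(s) = ∑_{n ≥ 1} a_n (tⁿ + t⁻ⁿ - 2 cos (n s))`, and each summand divided by
`t + t⁻¹ - 2 cos s` is the Laurent polynomial `∑_{|m| < n} sin ((n - |m|) s) / sin s · tᵐ`,
whose coefficients are bounded by `n` because `|sin (k s)| ≤ k |sin s|`.
So `b_m = -∑_n a_n sin ((n - |m|) s) / sin s`, and exchanging the order of summation gives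
`∑_m |b_m| (1 + |m|)^(α-2) ≤ ∑_n |a_n| · 2n · n (1 + n)^(α-2) ≤ 2 ‖a‖_α`, uniformly in `s`.
The identity for `b` is checked coefficientwise: multiplying a Laurent series by
`t + t⁻¹ - κ` takes second differences of its coefficients.
-/

theorem summable_norm_mul_one_add_abs_rpow_of_le {E : Type*} [SeminormedAddCommGroup E]
    {f : ℤ → E} {α β : ℝ} (hβα : β ≤ α)
    (hf : Summable fun j : ℤ => ‖f j‖ * (1 + (|j| : ℝ)) ^ α) :
    Summable fun j : ℤ => ‖f j‖ * (1 + (|j| : ℝ)) ^ β :=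
  hf.of_nonneg_of_le (fun j => by positivity) fun j =>
    mul_le_mul_of_nonneg_left
      (Real.rpow_le_rpow_of_exponent_le (le_add_of_nonneg_right (abs_nonneg _)) hβα) (norm_nonneg _)

theorem Summable.of_norm_mul_one_add_abs {E : Type*} [SeminormedAddCommGroup E] {f : ℤ → E}
    (hf : Summable fun j : ℤ => ‖f j‖ * (1 + (|j| : ℝ))) : Summable fun j : ℤ => ‖f j‖ :=
  hf.of_nonneg_of_le (fun _ => norm_nonneg _)
    fun _ => le_mul_of_one_le_right (norm_nonneg _) (le_add_of_nonneg_right (abs_nonneg _))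

theorem summable_mul_zpow_of_norm_eq_one {𝕜 : Type*} [NormedField 𝕜] [CompleteSpace 𝕜]
    {c : ℤ → 𝕜} (hc : Summable fun m => ‖c m‖) {t : 𝕜} (ht : ‖t‖ = 1) :
    Summable fun m : ℤ => c m * t ^ m :=
  Summable.of_norm <| hc.congr fun m => by rw [norm_mul, norm_zpow, ht, one_zpow, mul_one]

section Laurent
variable {𝕜 : Type*} [Field 𝕜] [TopologicalSpace 𝕜] [IsTopologicalRing 𝕜]
  {c : ℤ → 𝕜} {t S : 𝕜}

theorem HasSum.laurent_shift_sub_one (ht : t ≠ 0) (h : HasSum (fun m => c m * t ^ m) S) :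
    HasSum (fun m => c (m - 1) * t ^ m) (t * S) :=
  (Equiv.addRight (1 : ℤ)).hasSum_iff.mp <| (h.mul_left t).congr_fun fun m => by
    simp [zpow_add_one₀ ht]; ring

theorem HasSum.laurent_shift_add_one (ht : t ≠ 0) (h : HasSum (fun m => c m * t ^ m) S) :
    HasSum (fun m => c (m + 1) * t ^ m) (t⁻¹ * S) :=
  (Equiv.subRight (1 : ℤ)).hasSum_iff.mp <| (h.mul_left t⁻¹).congr_fun fun m => by
    simp [zpow_sub_one₀ ht]; ring

theorem HasSum.laurent_mul_add_inv_sub (ht : t ≠ 0) (κ : 𝕜) (h : HasSum (fun m => c m * t ^ m) S) :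
    HasSum (fun m => (c (m - 1) + c (m + 1) - κ * c m) * t ^ m) ((t + t⁻¹ - κ) * S) := by
  rw [add_sub_right_comm, add_mul, sub_mul]
  refine (((h.laurent_shift_sub_one ht).sub (h.mul_left κ)).add
    (h.laurent_shift_add_one ht)).congr_fun fun m => by ring

end Laurent

theorem summable_and_tsum_norm_tsum_mul_le {ι κ R : Type*} [NormedRing R]
    {f : ι → R} {K : ι → κ → R} {w : κ → ℝ} {B : ι → ℝ} (hw : ∀ k, 0 < w k)
    (hK : ∀ i, Summable fun k => ‖K i k‖ * w k) (hKB : ∀ i, ∑' k, ‖K i k‖ * w k ≤ B i)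
    (hfB : Summable fun i => ‖f i‖ * B i) :
    (Summable fun k => ‖∑' i, f i * K i k‖ * w k) ∧
      ∑' k, ‖∑' i, f i * K i k‖ * w k ≤ ∑' i, ‖f i‖ * B i := by
  set G : ι × κ → ℝ := fun p => ‖f p.1‖ * ‖K p.1 p.2‖ * w p.2 with hG_def
  have hG₀ : 0 ≤ G := fun p => by have := hw p.2; positivity
  have hrow : ∀ i, ∑' k, G (i, k) ≤ ‖f i‖ * B i := fun i => by
    simp only [hG_def, mul_assoc, tsum_mul_left]
    exact mul_le_mul_of_nonneg_left (hKB i) (norm_nonneg _)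
  have hG : Summable G := (summable_prod_of_nonneg hG₀).2
    ⟨fun i => by simpa only [hG_def, mul_assoc] using (hK i).mul_left ‖f i‖,
      hfB.of_nonneg_of_le (fun i => tsum_nonneg fun k => hG₀ _) hrow⟩
  have hcol : ∀ k, ‖∑' i, f i * K i k‖ * w k ≤ ∑' i, G (i, k) := fun k => by
    have hk : Summable fun i => ‖f i‖ * ‖K i k‖ :=
      ((hG.prod_symm.prod_factor k).mul_right (w k)⁻¹).congr fun i => by
        simp only [hG_def, Prod.swap, mul_inv_cancel_right₀ (hw k).ne']
    have hk' : Summable fun i => ‖f i * K i k‖ :=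
      hk.of_nonneg_of_le (fun i => norm_nonneg _) fun i => norm_mul_le _ _
    calc ‖∑' i, f i * K i k‖ * w k ≤ (∑' i, ‖f i‖ * ‖K i k‖) * w k := by
          refine mul_le_mul_of_nonneg_right ?_ (hw k).le
          exact (norm_tsum_le_tsum_norm hk').trans
            (hk'.tsum_le_tsum (fun i => norm_mul_le _ _) hk)
      _ = ∑' i, G (i, k) := tsum_mul_right.symm
  have hcols : Summable fun k => ∑' i, G (i, k) := hG.prod_symm.prod
  have hsum : Summable fun k => ‖∑' i, f i * K i k‖ * w k :=
    hcols.of_nonneg_of_le (fun k => mul_nonneg (norm_nonneg _) (hw k).le) hcol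
  refine ⟨hsum, ?_⟩
  calc ∑' k, ‖∑' i, f i * K i k‖ * w k ≤ ∑' k, ∑' i, G (i, k) :=
        hsum.tsum_le_tsum hcol hcols
    _ = ∑' i, ∑' k, G (i, k) := hG.tsum_comm
    _ ≤ ∑' i, ‖f i‖ * B i := hG.prod.tsum_le_tsum hrow hfB

theorem abs_sin_nat_mul_le (n : ℕ) (s : ℝ) : |Real.sin (n * s)| ≤ n * |Real.sin s| := by
  induction n with
  | zero => simp
  | succ n ih =>
    calc |Real.sin ((n + 1 : ℕ) * s)|
        = |Real.sin (n * s) * Real.cos s + Real.cos (n * s) * Real.sin s| := by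
          rw [← Real.sin_add]; push_cast; ring_nf
      _ ≤ |Real.sin (n * s)| * |Real.cos s| + |Real.cos (n * s)| * |Real.sin s| := by
          rw [← abs_mul, ← abs_mul]; exact abs_add_le _ _
      _ ≤ n * |Real.sin s| * 1 + 1 * |Real.sin s| :=
          add_le_add (mul_le_mul ih (Real.abs_cos_le_one _) (abs_nonneg _) (by positivity))
            (mul_le_mul_of_nonneg_right (Real.abs_cos_le_one _) (abs_nonneg _))
      _ = (n + 1 : ℕ) * |Real.sin s| := by push_cast; ring

/-- For `k ≥ 0` this is the Chebyshev value `U_{k-1}(cos s)`. -/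
noncomputable def sinRatio (s : ℝ) (k : ℤ) : ℝ :=
  if 0 < k then Real.sin (k * s) / Real.sin s else 0

theorem sinRatio_of_nonneg (s : ℝ) {k : ℤ} (hk : 0 ≤ k) :
    sinRatio s k = Real.sin (k * s) / Real.sin s := by
  rcases hk.lt_or_eq with hk | rfl
  · exact if_pos hk
  · simp [sinRatio]

theorem sinRatio_of_nonpos (s : ℝ) {k : ℤ} (hk : k ≤ 0) : sinRatio s k = 0 :=
  if_neg hk.not_gt

theorem abs_sinRatio_le (s : ℝ) (k : ℤ) : |sinRatio s k| ≤ max k 0 := by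
  rcases le_total k 0 with hk | hk
  · simp [sinRatio_of_nonpos s hk]
  · lift k to ℕ using hk
    rw [sinRatio_of_nonneg s (Int.natCast_nonneg k), abs_div]
    push_cast
    rw [max_eq_left (Nat.cast_nonneg k)]
    exact div_le_of_le_mul₀ (abs_nonneg _) (Nat.cast_nonneg k) (abs_sin_nat_mul_le k s)

theorem sinRatio_second_difference {s : ℝ} (hs : Real.sin s ≠ 0) (k : ℤ) :
    sinRatio s (k + 1) + sinRatio s (k - 1) - 2 * Real.cos s * sinRatio s k =
      if k = 0 then 1 else 0 := by
  rcases lt_trichotomy k 0 with hk | rfl | hk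
  · simp [sinRatio_of_nonpos s (show k + 1 ≤ 0 by omega), sinRatio_of_nonpos s hk.le,
      sinRatio_of_nonpos s (show k - 1 ≤ 0 by omega), hk.ne]
  · simp [sinRatio, hs]
  · have h : Real.sin ((k + 1) * s) + Real.sin ((k - 1) * s) =
        2 * Real.cos s * Real.sin (k * s) := by
      rw [add_mul, sub_mul, one_mul, Real.sin_add, Real.sin_sub]; ring
    rw [sinRatio_of_nonneg s (by omega), sinRatio_of_nonneg s (by omega),
      sinRatio_of_nonneg s hk.le, if_neg hk.ne']
    push_cast
    rw [← add_div, h]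
    ring

/-- The coefficient of `t ^ m` in the Laurent polynomial
`(t ^ n + t⁻¹ ^ n - 2 cos (n s)) / (t + t⁻¹ - 2 cos s)`. -/
noncomputable def quotientCoeff (s : ℝ) (n : ℕ) (m : ℤ) : ℝ := sinRatio s (n - |m|)

theorem quotientCoeff_eq_zero (s : ℝ) {n : ℕ} {m : ℤ} (hm : m ∉ Finset.Ioo (-n : ℤ) n) :
    quotientCoeff s n m = 0 := by
  have := le_abs_self m
  have := neg_abs_le m
  exact sinRatio_of_nonpos s (by simp only [Finset.mem_Ioo, not_and_or, not_lt] at hm; omega)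

theorem abs_quotientCoeff_le (s : ℝ) (n : ℕ) (m : ℤ) : |quotientCoeff s n m| ≤ n := by
  have h₁ := abs_sinRatio_le s (n - |m|)
  have h₂ : ((max (n - |m|) 0 : ℤ) : ℝ) ≤ n := by
    exact_mod_cast max_le (by linarith [abs_nonneg m]) (by omega)
  exact h₁.trans h₂

theorem quotientCoeff_second_difference {s : ℝ} (hs : Real.sin s ≠ 0) (n : ℕ) (m : ℤ) :
    quotientCoeff s n (m - 1) + quotientCoeff s n (m + 1) - 2 * Real.cos s * quotientCoeff s n m =
      (if m = n then 1 else 0) + (if m = -n then 1 else 0) -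
        if m = 0 then 2 * Real.cos (n * s) else 0 := by
  unfold quotientCoeff
  rcases lt_trichotomy m 0 with hm | rfl | hm
  · rw [abs_of_neg hm, abs_of_neg (by omega : m - 1 < 0), abs_of_nonpos (by omega : m + 1 ≤ 0),
      show (n : ℤ) - -(m - 1) = n + m - 1 by ring, show (n : ℤ) - -(m + 1) = n + m + 1 by ring,
      sub_neg_eq_add, add_comm (sinRatio s _), sinRatio_second_difference hs,
      if_neg (show m ≠ n by omega), if_neg hm.ne]
    simp [eq_neg_iff_add_eq_zero, add_comm]
  · rcases Nat.eq_zero_or_pos n with rfl | hn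
    · norm_num [sinRatio]
    · have h : Real.sin ((n - 1) * s) =
          Real.sin (n * s) * Real.cos s - Real.cos (n * s) * Real.sin s := by
        rw [sub_mul, one_mul, Real.sin_sub]
      simp only [zero_sub, zero_add, abs_neg, abs_one, abs_zero, sub_zero]
      rw [sinRatio_of_nonneg s (by omega), sinRatio_of_nonneg s (by omega),
        if_neg (show (0 : ℤ) ≠ n by omega), if_neg (show (0 : ℤ) ≠ -n by omega), if_pos trivial]
      push_cast
      rw [h]
      field_simp
      ring
  · rw [abs_of_pos hm, abs_of_nonneg (by omega : 0 ≤ m - 1), abs_of_pos (by omega : 0 < m + 1),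
      show (n : ℤ) - (m - 1) = n - m + 1 by ring, show (n : ℤ) - (m + 1) = n - m - 1 by ring,
      sinRatio_second_difference hs, if_neg (show m ≠ -n by omega), if_neg hm.ne']
    simp [sub_eq_zero, eq_comm]

theorem summable_norm_quotientCoeff_mul (s : ℝ) (n : ℕ) (w : ℤ → ℝ) :
    Summable fun m : ℤ => ‖(quotientCoeff s n m : ℂ)‖ * w m :=
  summable_of_ne_finset_zero (s := Finset.Ioo (-n : ℤ) n) fun m hm => by
    simp [quotientCoeff_eq_zero s hm]

theorem tsum_norm_quotientCoeff_mul_rpow_le (s : ℝ) (n : ℕ) {α : ℝ} (hα : 2 ≤ α) :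
    ∑' m : ℤ, ‖(quotientCoeff s n m : ℂ)‖ * (1 + (|m| : ℝ)) ^ (α - 2) ≤ 2 * (1 + n) ^ α := by
  have hsupp : ∀ m ∉ Finset.Ioo (-n : ℤ) n,
      ‖(quotientCoeff s n m : ℂ)‖ * (1 + (|m| : ℝ)) ^ (α - 2) = 0 := fun m hm => by
    simp [quotientCoeff_eq_zero s hm]
  have hterm : ∀ m ∈ Finset.Ioo (-n : ℤ) n,
      ‖(quotientCoeff s n m : ℂ)‖ * (1 + (|m| : ℝ)) ^ (α - 2) ≤ n * (1 + n) ^ (α - 2) := by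
    intro m hm
    have hm' : (|m| : ℝ) ≤ n := by
      rw [← Int.cast_abs]; exact_mod_cast (abs_lt.2 (Finset.mem_Ioo.1 hm)).le
    rw [Complex.norm_real, Real.norm_eq_abs]
    gcongr
    exact abs_quotientCoeff_le s n m
  have hcard : ((Finset.Ioo (-n : ℤ) n).card : ℝ) ≤ 2 * n := by
    rw [Int.card_Ioo]; exact_mod_cast (show ((n - -n - 1 : ℤ).toNat : ℤ) ≤ 2 * n by omega)
  have hpow : (1 + n : ℝ) ^ α = (1 + n) ^ (α - 2) * (1 + n) ^ 2 := by
    rw [← Real.rpow_natCast, ← Real.rpow_add (by positivity)]; norm_num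
  calc ∑' m : ℤ, ‖(quotientCoeff s n m : ℂ)‖ * (1 + (|m| : ℝ)) ^ (α - 2)
      = ∑ m ∈ Finset.Ioo (-n : ℤ) n, ‖(quotientCoeff s n m : ℂ)‖ * (1 + (|m| : ℝ)) ^ (α - 2) :=
        tsum_eq_sum hsupp
    _ ≤ (Finset.Ioo (-n : ℤ) n).card * (n * (1 + n) ^ (α - 2)) := by
        simpa only [nsmul_eq_mul] using Finset.sum_le_card_nsmul _ _ _ hterm
    _ ≤ 2 * n * (n * (1 + n) ^ (α - 2)) := by gcongr
    _ ≤ 2 * (1 + n) ^ α := by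
        rw [hpow]
        have : (0 : ℝ) ≤ (1 + n) ^ (α - 2) := by positivity
        nlinarith [(Nat.cast_nonneg n : (0 : ℝ) ≤ n)]

theorem two_cos_eq_exp_add_exp (x : ℝ) :
    ((2 * Real.cos x : ℝ) : ℂ) = Complex.exp (Complex.I * x) + Complex.exp (-(Complex.I * x)) := by
  push_cast
  rw [Complex.two_cos, neg_mul, mul_comm (x : ℂ)]

theorem hasSum_nat_mul_two_cos {f : ℤ → ℂ} (hf : Summable fun j => ‖f j‖)
    (hsym : ∀ j, f (-j) = f j) (s : ℝ) :
    HasSum (fun n : ℕ => f n * ((2 * Real.cos (n * s) : ℝ) : ℂ))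
      ((∑' j : ℤ, f j * Complex.exp (Complex.I * j * s)) + f 0) := by
  have hF : Summable fun j : ℤ => f j * Complex.exp (Complex.I * j * s) :=
    Summable.of_norm <| hf.congr fun j => by
      rw [norm_mul, show Complex.I * j * s = ((j * s : ℝ) : ℂ) * Complex.I by push_cast; ring,
        Complex.norm_exp_ofReal_mul_I, mul_one]
  convert hF.hasSum.nat_add_neg using 1
  · ext n
    rw [hsym, two_cos_eq_exp_add_exp, mul_add]
    push_cast
    ring_nf
  · simp

/-- The Laurent coefficients of `b(·, s)`. -/
noncomputable def bCoeff (f : ℤ → ℂ) (s : ℝ) (m : ℤ) : ℂ :=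
  -∑' n : ℕ, f n * quotientCoeff s n m

theorem bCoeff_weighted_summable_and_le {α : ℝ} (hα : 2 ≤ α) {f : ℤ → ℂ}
    (hf : Summable fun j : ℤ => ‖f j‖ * (1 + (|j| : ℝ)) ^ α) (s : ℝ) :
    (Summable fun m : ℤ => ‖bCoeff f s m‖ * (1 + (|m| : ℝ)) ^ (α - 2)) ∧
      ∑' m : ℤ, ‖bCoeff f s m‖ * (1 + (|m| : ℝ)) ^ (α - 2) ≤
        2 * ∑' j : ℤ, ‖f j‖ * (1 + (|j| : ℝ)) ^ α := by
  have hfℕ : Summable fun n : ℕ => ‖f n‖ * (1 + (n : ℝ)) ^ α := by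
    simpa [Function.comp_def] using hf.comp_injective Nat.cast_injective
  obtain ⟨hsum, hle⟩ := summable_and_tsum_norm_tsum_mul_le (f := fun n : ℕ => f n)
    (K := fun n m => (quotientCoeff s n m : ℂ)) (fun m => by positivity)
    (fun n => summable_norm_quotientCoeff_mul s n _)
    (fun n => tsum_norm_quotientCoeff_mul_rpow_le s n hα) (B := fun n => 2 * (1 + n) ^ α)
    (by simpa only [mul_left_comm] using hfℕ.mul_left 2)
  simp only [bCoeff, norm_neg]
  refine ⟨hsum, hle.trans ?_⟩
  simp only [mul_left_comm _ (2 : ℝ), tsum_mul_left]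
  gcongr
  exact hfℕ.tsum_le_tsum_of_inj _ Nat.cast_injective (fun j _ => by positivity)
    (fun n => by simp) hf

theorem hasSum_mul_quotientCoeff {f : ℤ → ℂ}
    (hf : Summable fun j : ℤ => ‖f j‖ * (1 + (|j| : ℝ))) (s : ℝ) (m : ℤ) :
    HasSum (fun n : ℕ => f n * quotientCoeff s n m) (-bCoeff f s m) := by
  rw [bCoeff, neg_neg]
  refine (Summable.of_norm_bounded (g := fun n : ℕ => ‖f n‖ * (1 + |((n : ℤ) : ℝ)|))
    (hf.comp_injective Nat.cast_injective) fun n => ?_).hasSum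
  rw [norm_mul, Complex.norm_real, Real.norm_eq_abs]
  gcongr
  exact (abs_quotientCoeff_le s n m).trans (by simp)

theorem hasSum_mul_second_difference_quotientCoeff {f : ℤ → ℂ}
    (hf : Summable fun j : ℤ => ‖f j‖) (hsym : ∀ j, f (-j) = f j) (s : ℝ) (m : ℤ) :
    HasSum (fun n : ℕ => f n * (((if m = n then 1 else 0) + (if m = -n then 1 else 0) -
        if m = 0 then 2 * Real.cos (n * s) else 0 : ℝ) : ℂ))
      (f m - if m = 0 then ∑' j : ℤ, f j * Complex.exp (Complex.I * j * s) else 0) := by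
  rcases eq_or_ne m 0 with rfl | hm
  · have h₀ : HasSum (fun n : ℕ => f n * (((if (0 : ℤ) = n then 1 else 0) +
        (if (0 : ℤ) = -n then 1 else 0) : ℝ) : ℂ)) (2 * f 0) := by
      convert hasSum_single 0 fun n hn => ?_ using 1
      · norm_num [mul_comm]
      · simp [eq_comm, hn]
    rw [if_pos rfl, show f 0 - ∑' j : ℤ, f j * Complex.exp (Complex.I * j * s) =
      2 * f 0 - ((∑' j : ℤ, f j * Complex.exp (Complex.I * j * s)) + f 0) by ring]
    exact (h₀.sub (hasSum_nat_mul_two_cos hf hsym s)).congr_fun fun n => by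
      rw [if_pos rfl, Complex.ofReal_sub, mul_sub]
  · have hval : f m = f m.natAbs * ((((if m = m.natAbs then 1 else 0) +
        (if m = -m.natAbs then 1 else 0) - if m = 0 then 2 * Real.cos (m.natAbs * s) else 0 :
          ℝ)) : ℂ) := by
      rw [if_neg hm, sub_zero]
      rcases Int.natAbs_eq m with h | h
      · rw [if_pos h, if_neg (by omega)]; nth_rw 1 [h]; simp
      · rw [if_neg (by omega), if_pos h]; nth_rw 1 [h, hsym]; simp
    rw [if_neg hm, sub_zero, hval]
    exact hasSum_single m.natAbs fun n hn => by
      rw [if_neg (by omega), if_neg (by omega), if_neg hm]; simp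

theorem bCoeff_second_difference {f : ℤ → ℂ}
    (hf : Summable fun j : ℤ => ‖f j‖ * (1 + (|j| : ℝ))) (hsym : ∀ j, f (-j) = f j)
    {s : ℝ} (hs : Real.sin s ≠ 0) (m : ℤ) :
    bCoeff f s (m - 1) + bCoeff f s (m + 1) - ((2 * Real.cos s : ℝ) : ℂ) * bCoeff f s m =
      (if m = 0 then ∑' j : ℤ, f j * Complex.exp (Complex.I * j * s) else 0) - f m := by
  have h := ((hasSum_mul_quotientCoeff hf s (m - 1)).add
    (hasSum_mul_quotientCoeff hf s (m + 1))).sub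
      ((hasSum_mul_quotientCoeff hf s m).mul_left ((2 * Real.cos s : ℝ) : ℂ))
  have h' := hasSum_mul_second_difference_quotientCoeff hf.of_norm_mul_one_add_abs hsym s m
  linear_combination (-1 : ℂ) * h.unique (h'.congr_fun fun n => by
    rw [← quotientCoeff_second_difference hs n m]; push_cast; ring)

theorem tsum_bCoeff_mul_zpow {f : ℤ → ℂ}
    (hf : Summable fun j : ℤ => ‖f j‖ * (1 + (|j| : ℝ))) (hsym : ∀ j, f (-j) = f j)
    {s : ℝ} (hs : Real.sin s ≠ 0) (hb : Summable fun m => ‖bCoeff f s m‖) {t : ℂ} (ht : ‖t‖ = 1)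
    (ht₁ : t ≠ Complex.exp (Complex.I * s)) (ht₂ : t ≠ Complex.exp (-(Complex.I * s))) :
    ∑' m : ℤ, bCoeff f s m * t ^ m =
      ((∑' j : ℤ, f j * t ^ j) - ∑' j : ℤ, f j * Complex.exp (Complex.I * j * s)) *
        Complex.exp (Complex.I * s) /
          ((t - Complex.exp (Complex.I * s)) * (t⁻¹ - Complex.exp (Complex.I * s))) := by
  set E := Complex.exp (Complex.I * s)
  set g := ∑' j : ℤ, f j * Complex.exp (Complex.I * j * s)
  have ht₀ : t ≠ 0 := by rintro rfl; simp at ht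
  have hlhs := ((summable_mul_zpow_of_norm_eq_one hb ht).hasSum.laurent_mul_add_inv_sub ht₀
    ((2 * Real.cos s : ℝ) : ℂ))
  simp only [bCoeff_second_difference hf hsym hs] at hlhs
  have hrhs : HasSum (fun m : ℤ => ((if m = 0 then g else 0) - f m) * t ^ m)
      (g - ∑' j : ℤ, f j * t ^ j) :=
    ((hasSum_ite_eq 0 g).sub (summable_mul_zpow_of_norm_eq_one hf.of_norm_mul_one_add_abs
      ht).hasSum).congr_fun fun m => by split_ifs with hm <;> simp [hm]
  have hkey := hlhs.unique hrhs
  have hE : E * E⁻¹ = 1 := mul_inv_cancel₀ (Complex.exp_ne_zero _)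
  have htt : t * t⁻¹ = 1 := mul_inv_cancel₀ ht₀
  have hcos : ((2 * Real.cos s : ℝ) : ℂ) = E + E⁻¹ := by
    rw [two_cos_eq_exp_add_exp, Complex.exp_neg]
  have hden : (t - E) * (t⁻¹ - E) ≠ 0 := by
    refine mul_ne_zero (sub_ne_zero.2 ht₁) (sub_ne_zero.2 fun h => ht₂ ?_)
    rw [Complex.exp_neg]
    exact (inv_inv t).symm.trans (congrArg _ h)
  rw [eq_div_iff hden]
  rw [hcos] at hkey
  linear_combination (-E) * hkey + (∑' m : ℤ, bCoeff f s m * t ^ m) * (htt - hE)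

/-- For a symmetric symbol `a ∈ W^α`, `α ≥ 2`, the regularized function
`b(t,s) = (a(t) − g(s)) e^{is} / ((t − e^{is})(t^{-1} − e^{is}))` lies in `W^{α−2}`
with norm bounded by `C·‖a‖_α`, uniformly in `s ∈ (0,π)`. -/
theorem stmt9 (α : ℝ) (hα : 2 ≤ α) (f : ℤ → ℂ)
    (hf : Summable fun j : ℤ => ‖f j‖ * (1 + (|j| : ℝ)) ^ α)
    (hsym : ∀ j : ℤ, f (-j) = f j) :
    ∃ C > 0, ∀ s : ℝ, s ∈ Set.Ioo 0 Real.pi →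
      ∃ c : ℤ → ℂ,
        (Summable fun j : ℤ => ‖c j‖ * (1 + (|j| : ℝ)) ^ (α - 2)) ∧
        (∑' j : ℤ, ‖c j‖ * (1 + (|j| : ℝ)) ^ (α - 2) ≤
          C * ∑' j : ℤ, ‖f j‖ * (1 + (|j| : ℝ)) ^ α) ∧
        (∀ t : ℂ, ‖t‖ = 1 → t ≠ Complex.exp (Complex.I * (s : ℂ)) →
            t ≠ Complex.exp (-(Complex.I * (s : ℂ))) →
          ∑' j : ℤ, c j * t ^ j =
            ((∑' j : ℤ, f j * t ^ j) -
                ∑' j : ℤ, f j * Complex.exp (Complex.I * (j : ℂ) * (s : ℂ))) *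
              Complex.exp (Complex.I * (s : ℂ)) /
              ((t - Complex.exp (Complex.I * (s : ℂ))) *
                (t⁻¹ - Complex.exp (Complex.I * (s : ℂ))))) := by
  refine ⟨2, two_pos, fun s ⟨hs₀, hsπ⟩ => ?_⟩
  have hs : Real.sin s ≠ 0 := (Real.sin_pos_of_pos_of_lt_pi hs₀ hsπ).ne'
  have hf₁ : Summable fun j : ℤ => ‖f j‖ * (1 + (|j| : ℝ)) := by
    simpa using summable_norm_mul_one_add_abs_rpow_of_le (by linarith : (1 : ℝ) ≤ α) hf
  obtain ⟨hb, hb_le⟩ := bCoeff_weighted_summable_and_le hα hf s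
  have hb₀ : Summable fun m : ℤ => ‖bCoeff f s m‖ := by
    simpa using summable_norm_mul_one_add_abs_rpow_of_le (sub_nonneg.2 hα) hb
  exact ⟨bCoeff f s, hb, hb_le, fun t ht ht₁ ht₂ => tsum_bCoeff_mul_zpow hf₁ hsym hs hb₀ ht ht₁ ht₂⟩
end

section
/- Let b ∈ W^β (β ≥ 0) with b(t) ≠ 0 on 𝕋 and wind(b) = 0, and suppose b(t^{-1}) = b(t) for all t ∈ 𝕋. Then in the Wiener–Hopf factorization b = b_+ · b_− (with b_± ∈ W^β_±, wind(b_±) = 0) one has b_−(t) = b_+(t^{-1})/χ_b, where χ_b = exp((1/π) ∫_0^π log b(e^{iφ}) dφ). -/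
/-!
Splitting `log b = ∑ L_j t^j` into the terms `j = 0`, `j ≥ 1` and `j ≤ -1` gives `b = b₊ b₋`.
The symmetry `L_{-j} = L_j` turns the negative part at `t` into the positive part at `t⁻¹`, and it
also computes `χ_b`: averaging the termwise integrals `L_j ∫₀^π e^{ijφ} dφ` with their reflections
`j ↦ -j` leaves `L_j ∫₀^π 2 cos (jφ) dφ`, which vanishes unless `j = 0`. Hence `χ_b = e^{L_0}`,
and `b₊(t⁻¹) / χ_b = b₋(t)`.
-/

open Complex

lemma summable_norm_of_summable_norm_mul_one_add_abs_rpow {E : Type*} [SeminormedAddCommGroup E]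
    {L : ℤ → E} {β : ℝ} (hβ : 0 ≤ β)
    (hL : Summable fun j : ℤ => ‖L j‖ * (1 + (|j| : ℝ)) ^ β) :
    Summable fun j => ‖L j‖ :=
  hL.of_nonneg_of_le (fun _ => norm_nonneg _) fun j =>
    le_mul_of_one_le_right (norm_nonneg _)
      (Real.one_le_rpow (le_add_of_nonneg_right (by positivity)) hβ)

lemma summable_mul_zpow_of_norm_eq_one_s13 {L : ℤ → ℂ} (hL : Summable fun j => ‖L j‖) {t : ℂ}
    (ht : ‖t‖ = 1) : Summable fun j : ℤ => L j * t ^ j :=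
  .of_norm <| by simpa [norm_zpow, ht] using hL

lemma tsum_int_eq_zero_add_tsum_add_one_add_tsum_neg {E : Type*} [NormedAddCommGroup E]
    [CompleteSpace E] {f : ℤ → E} (hf : Summable f) :
    ∑' j, f j = (f 0 + ∑' k : ℕ, f ((k : ℤ) + 1)) + ∑' k : ℕ, f (-((k : ℤ) + 1)) := by
  rw [tsum_of_add_one_of_neg_add_one (hf.comp_injective fun a b h => by omega)
    (hf.comp_injective fun a b h => by omega), add_comm (∑' k : ℕ, _) (f 0)]

lemma integral_cexp_int_mul_I_add_neg_eq_zero {j : ℤ} (hj : j ≠ 0) :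
    (∫ φ in (0 : ℝ)..Real.pi, cexp (I * j * φ)) +
      ∫ φ in (0 : ℝ)..Real.pi, cexp (I * ((-j : ℤ) : ℂ) * φ) = 0 := by
  have hIj : I * j ≠ 0 := mul_ne_zero I_ne_zero (by exact_mod_cast hj)
  -- `e^{ijπ} = e^{-ijπ}` since they differ by the factor `e^{2πij} = 1`
  have hperiod : cexp (I * j * Real.pi) = cexp (-(I * j) * Real.pi) :=
    exp_eq_exp_iff_exists_int.2 ⟨j, by ring⟩
  rw [Int.cast_neg, ← neg_mul_eq_mul_neg, integral_exp_mul_complex hIj,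
    integral_exp_mul_complex (neg_ne_zero.2 hIj), hperiod]
  simp only [ofReal_zero, mul_zero]
  ring

lemma norm_restrict_mul_cexp_le (c : ℂ) (j : ℤ) (K : TopologicalSpace.Compacts ℝ) :
    ‖(⟨fun φ : ℝ => c * cexp (I * j * φ), by fun_prop⟩ : C(ℝ, ℂ)).restrict K‖ ≤ ‖c‖ :=
  (ContinuousMap.norm_le _ (norm_nonneg _)).2 fun φ => by
    rw [ContinuousMap.restrict_apply, ContinuousMap.coe_mk, norm_mul,
      show I * j * (φ : ℝ) = I * ((j * φ : ℝ) : ℂ) by push_cast; ring, norm_exp_I_mul_ofReal,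
      mul_one]

lemma integral_tsum_mul_cexp_of_symm {L : ℤ → ℂ} (hL : Summable fun j => ‖L j‖)
    (hsym : ∀ j, L (-j) = L j) :
    ∫ φ in (0 : ℝ)..Real.pi, ∑' j : ℤ, L j * cexp (I * j * φ) = Real.pi * L 0 := by
  set c : ℤ → ℂ := fun j => ∫ φ in (0 : ℝ)..Real.pi, cexp (I * j * φ)
  set S := ∫ φ in (0 : ℝ)..Real.pi, ∑' j : ℤ, L j * cexp (I * j * φ)
  have hsum : HasSum (fun j => L j * c j) S := by
    simpa only [c, ContinuousMap.coe_mk, ← intervalIntegral.integral_const_mul] using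
      intervalIntegral.hasSum_intervalIntegral_of_summable_norm (a := 0) (b := Real.pi)
      (hL.of_nonneg_of_le (fun _ => norm_nonneg _) fun j => norm_restrict_mul_cexp_le (L j) j _)
  have hsum_neg : HasSum (fun j => L j * c (-j)) S := by
    simpa only [Function.comp_def, Equiv.neg_apply, hsym] using (Equiv.neg ℤ).hasSum_iff.2 hsum
  have hc₀ : c 0 = Real.pi := by simp [c]
  have hsum_sym : HasSum (fun j => L j * (c j + c (-j))) (2 * Real.pi * L 0) := by
    convert hasSum_single (f := fun j => L j * (c j + c (-j))) 0 fun j hj => by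
      simp only [c, integral_cexp_int_mul_I_add_neg_eq_zero hj, mul_zero] using 1
    rw [neg_zero, hc₀]
    ring
  have htwice := (hsum.add hsum_neg).unique (by simpa only [mul_add] using hsum_sym)
  linear_combination htwice / 2

/-- Wiener–Hopf factorization of a symmetric symbol `b = exp(∑_j L_j t^j)` with winding
number zero: with `b_+(t) = exp(L_0 + ∑_{j≥1} L_j t^j)` and
`b_-(t) = exp(∑_{j≤-1} L_j t^j)`, one has `b = b_+ b_-` on the circle, and
`b_-(t) = b_+(t^{-1}) / χ_b`, where `χ_b = exp((1/π)∫_0^π log b(e^{iφ}) dφ)`. -/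
theorem stmt13 (β : ℝ) (hβ : 0 ≤ β) (L : ℤ → ℂ)
    (hL : Summable fun j : ℤ => ‖L j‖ * (1 + (|j| : ℝ)) ^ β)
    (hsym : ∀ j : ℤ, L (-j) = L j) :
    ∀ t : ℂ, ‖t‖ = 1 →
      (Complex.exp (∑' j : ℤ, L j * t ^ j) =
        Complex.exp (L 0 + ∑' k : ℕ, L ((k : ℤ) + 1) * t ^ ((k : ℤ) + 1)) *
          Complex.exp (∑' k : ℕ, L (-((k : ℤ) + 1)) * t ^ (-((k : ℤ) + 1)))) ∧
      Complex.exp (∑' k : ℕ, L (-((k : ℤ) + 1)) * t ^ (-((k : ℤ) + 1))) =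
        Complex.exp (L 0 + ∑' k : ℕ, L ((k : ℤ) + 1) * (t⁻¹) ^ ((k : ℤ) + 1)) /
          Complex.exp ((1 / (Real.pi : ℂ)) *
            ∫ φ in (0 : ℝ)..Real.pi,
              ∑' j : ℤ, L j * Complex.exp (Complex.I * (j : ℂ) * (φ : ℂ))) := by
  intro t ht
  have hL₁ := summable_norm_of_summable_norm_mul_one_add_abs_rpow hβ hL
  have hreflect : ∑' k : ℕ, L (-((k : ℤ) + 1)) * t ^ (-((k : ℤ) + 1)) =
      ∑' k : ℕ, L ((k : ℤ) + 1) * t⁻¹ ^ ((k : ℤ) + 1) := by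
    simp only [hsym, zpow_neg, inv_zpow]
  refine ⟨by rw [tsum_int_eq_zero_add_tsum_add_one_add_tsum_neg
    (summable_mul_zpow_of_norm_eq_one_s13 hL₁ ht), zpow_zero, mul_one, exp_add], ?_⟩
  rw [hreflect, integral_tsum_mul_cexp_of_symm hL₁ hsym, one_div,
    inv_mul_cancel_left₀ (ofReal_ne_zero.2 Real.pi_ne_zero), exp_add,
    mul_div_cancel_left₀ _ (exp_ne_zero _)]
end
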